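/- For every integer n ≥ 5 there exists an almost peripheral graph of order n with exactly ⌊(n−1)²/2⌋ edges; if n is odd, this is attained by the complement of the disjoint union of K_1 and (n−1)/2 copies of K_2, and if n is even, it is attained by the complement of the disjoint union of K_1, (n−4)/2 copies of K_2, and a path P_3. -/

import Mathlib

/-!
In both graphs `G` the vertex of `K_1` is isolated and every other vertex has a neighbour. Hence
in `Gᶜ` that vertex is adjacent to all others, so it has eccentricity 1, every distance is at
most 2, and every other vertex, having a non-neighbour, has eccentricity 2 = diameter. The edge
count is `C(n, 2)` minus the `(n - 1) / 2`, resp. `(n - 4) / 2 + 2`, edges of `G`.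
-/

open SimpleGraph

/-- The eccentricity of a vertex `v`: the maximum distance from `v` to any vertex. -/
noncomputable def graphEcc {V : Type*} [Fintype V] (G : SimpleGraph V) (v : V) : ℕ :=
  Finset.univ.sup fun u => G.dist v u

/-- The radius of a graph: the minimum eccentricity over all vertices. -/
noncomputable def graphRadius {V : Type*} [Fintype V] (G : SimpleGraph V) : ℕ :=
  sInf (Set.range (graphEcc G))

/-- The diameter of a graph: the maximum eccentricity over all vertices. -/
noncomputable def graphDiam {V : Type*} [Fintype V] (G : SimpleGraph V) : ℕ :=
  Finset.univ.sup (graphEcc G)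

/-- A connected graph of order `n` is almost self-centered if it has exactly `n - 2`
central vertices (vertices whose eccentricity equals the radius). -/
def IsAlmostSelfCentered {V : Type*} [Fintype V] (G : SimpleGraph V) : Prop :=
  G.Connected ∧ Nat.card {v : V | graphEcc G v = graphRadius G} = Fintype.card V - 2

/-- A connected graph of order `n` is almost peripheral if it has exactly `n - 1`
peripheral vertices (vertices whose eccentricity equals the diameter). -/
def IsAlmostPeripheral {V : Type*} [Fintype V] (G : SimpleGraph V) : Prop :=
  G.Connected ∧ Nat.card {v : V | graphEcc G v = graphDiam G} = Fintype.card V - 1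

/-- The disjoint union of `K_1` and `m` copies of `K_2`. -/
def K1PlusMatching (m : ℕ) : SimpleGraph (Unit ⊕ Fin m × Fin 2) :=
  SimpleGraph.fromRel fun a b =>
    match a, b with
    | Sum.inr (i, x), Sum.inr (j, y) => i = j ∧ x ≠ y
    | _, _ => False

/-- The disjoint union of `K_1`, `m` copies of `K_2`, and a path `P_3`. -/
def K1PlusMatchingPlusP3 (m : ℕ) : SimpleGraph (Unit ⊕ ((Fin m × Fin 2) ⊕ Fin 3)) :=
  SimpleGraph.fromRel fun a b =>
    match a, b with
    | Sum.inr (Sum.inl (i, x)), Sum.inr (Sum.inl (j, y)) => i = j ∧ x ≠ y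
    | Sum.inr (Sum.inr p), Sum.inr (Sum.inr q) => (SimpleGraph.pathGraph 3).Adj p q
    | _, _ => False

namespace SimpleGraph

section Eccentricity

variable {V : Type*} [Fintype V] {G : SimpleGraph V}

lemma dist_le_graphEcc (v w : V) : G.dist v w ≤ graphEcc G v :=
  Finset.le_sup (Finset.mem_univ w)

lemma graphEcc_le_iff {v : V} {k : ℕ} : graphEcc G v ≤ k ↔ ∀ w, G.dist v w ≤ k := by
  simp [graphEcc]

end Eccentricity

lemma ncard_edgeSet_compl {V : Type*} [Fintype V] (G : SimpleGraph V) :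
    Gᶜ.edgeSet.ncard = (Fintype.card V).choose 2 - G.edgeSet.ncard := by
  classical
  rw [← top_sdiff, edgeSet_sdiff, Set.ncard_sdiff (edgeSet_mono le_top),
    ← card_edgeFinset_top_eq_card_choose_two, ← coe_edgeFinset, Set.ncard_coe_finset]

section UniversalVertex

variable {V : Type*} {G : SimpleGraph V} {u : V}

lemma connected_of_forall_adj (hu : ∀ v ≠ u, G.Adj u v) : G.Connected :=
  (connected_iff_exists_forall_reachable G).mpr ⟨u, fun v =>
    (em (v = u)).elim (fun h => h ▸ Reachable.rfl) fun h => (hu v h).reachable⟩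

lemma dist_le_one_of_forall_adj (hu : ∀ v ≠ u, G.Adj u v) (v : V) : G.dist u v ≤ 1 := by
  by_cases h : v = u
  · simp [h]
  · exact (dist_eq_one_iff_adj.mpr (hu v h)).le

lemma dist_le_two_of_forall_adj (hu : ∀ v ≠ u, G.Adj u v) (v w : V) : G.dist v w ≤ 2 :=
  calc G.dist v w ≤ G.dist v u + G.dist u w := (connected_of_forall_adj hu).dist_triangle
    _ ≤ 1 + 1 := by
      rw [dist_comm]
      exact add_le_add (dist_le_one_of_forall_adj hu v) (dist_le_one_of_forall_adj hu w)

variable [Fintype V]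

lemma graphEcc_eq_one_of_forall_adj [Nontrivial V] (hu : ∀ v ≠ u, G.Adj u v) :
    graphEcc G u = 1 := by
  obtain ⟨v, hv⟩ := exists_ne u
  refine le_antisymm (graphEcc_le_iff.mpr (dist_le_one_of_forall_adj hu)) ?_
  exact (dist_eq_one_iff_adj.mpr (hu v hv)).symm.le.trans (dist_le_graphEcc u v)

lemma graphEcc_eq_two_of_forall_adj (hu : ∀ v ≠ u, G.Adj u v) {v w : V} (hvw : v ≠ w)
    (hnadj : ¬ G.Adj v w) : graphEcc G v = 2 := by
  refine le_antisymm (graphEcc_le_iff.mpr (dist_le_two_of_forall_adj hu v)) ?_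
  have hpos : 0 < G.dist v w := (connected_of_forall_adj hu).pos_dist_of_ne hvw
  have hne : G.dist v w ≠ 1 := fun h => hnadj (dist_eq_one_iff_adj.mp h)
  have : 2 ≤ G.dist v w := by omega
  exact this.trans (dist_le_graphEcc v w)

theorem isAlmostPeripheral_of_forall_adj [Nontrivial V] (hu : ∀ v ≠ u, G.Adj u v)
    (hv : ∀ v ≠ u, ∃ w, v ≠ w ∧ ¬ G.Adj v w) : IsAlmostPeripheral G := by
  classical
  have hecc : ∀ v ≠ u, graphEcc G v = 2 := fun v hvu =>
    let ⟨_, hvw, hnadj⟩ := hv v hvu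
    graphEcc_eq_two_of_forall_adj hu hvw hnadj
  have hdiam : graphDiam G = 2 := by
    obtain ⟨v, hvu⟩ := exists_ne u
    refine le_antisymm (Finset.sup_le fun w _ => ?_) ?_
    by_cases hw : w = u
    · simp [hw, graphEcc_eq_one_of_forall_adj hu]
    · exact (hecc w hw).le
    exact hecc v hvu ▸ Finset.le_sup (Finset.mem_univ v)
  have hperipheral : {v | graphEcc G v = graphDiam G} = {u}ᶜ := by
    ext v
    by_cases hvu : v = u
    · simp [hvu, hdiam, graphEcc_eq_one_of_forall_adj hu]
    · simp [hvu, hdiam, hecc v hvu]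
  refine ⟨connected_of_forall_adj hu, ?_⟩
  rw [hperipheral, Nat.card_eq_fintype_card, Fintype.card_compl_set, Set.card_singleton]

theorem isAlmostPeripheral_compl [Nontrivial V] (hu : ∀ v, ¬ G.Adj u v)
    (hv : ∀ v ≠ u, ∃ w, G.Adj v w) : IsAlmostPeripheral Gᶜ :=
  isAlmostPeripheral_of_forall_adj (fun v hvu => ⟨hvu.symm, hu v⟩) fun v hvu =>
    let ⟨w, hvw⟩ := hv v hvu
    ⟨w, hvw.ne, fun h => h.2 hvw⟩

end UniversalVertex

end SimpleGraph

namespace K1PlusMatching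

variable {m : ℕ}

lemma not_adj_inl (v : Unit ⊕ Fin m × Fin 2) : ¬ (K1PlusMatching m).Adj (Sum.inl ()) v := by
  simp [K1PlusMatching]

lemma exists_adj : ∀ v ≠ Sum.inl (), ∃ w, (K1PlusMatching m).Adj v w := by
  rintro (_ | ⟨i, x⟩) hv
  · exact absurd rfl hv
  · exact ⟨Sum.inr (i, x + 1), by fin_cases x <;> simp [K1PlusMatching]⟩

lemma edgeSet_eq_range :
    (K1PlusMatching m).edgeSet = Set.range fun i => s(Sum.inr (i, 0), Sum.inr (i, 1)) := by
  ext e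
  induction e using Sym2.ind with
  | _ a b =>
    rcases a with _ | ⟨i, x⟩ <;> rcases b with _ | ⟨j, y⟩ <;> simp [K1PlusMatching]
    fin_cases x <;> fin_cases y <;> simp [eq_comm]

lemma ncard_edgeSet : (K1PlusMatching m).edgeSet.ncard = m := by
  rw [edgeSet_eq_range, Set.ncard_range_of_injective, Nat.card_eq_fintype_card, Fintype.card_fin]
  intro i j h
  simpa using h

end K1PlusMatching

namespace K1PlusMatchingPlusP3

variable {m : ℕ}

lemma not_adj_inl (v : Unit ⊕ ((Fin m × Fin 2) ⊕ Fin 3)) :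
    ¬ (K1PlusMatchingPlusP3 m).Adj (Sum.inl ()) v := by
  simp [K1PlusMatchingPlusP3]

lemma exists_adj : ∀ v ≠ Sum.inl (), ∃ w, (K1PlusMatchingPlusP3 m).Adj v w := by
  rintro (_ | ⟨i, x⟩ | p) hv
  · exact absurd rfl hv
  · exact ⟨Sum.inr (Sum.inl (i, x + 1)), by fin_cases x <;> simp [K1PlusMatchingPlusP3]⟩
  · obtain ⟨q, hpq⟩ : ∃ q, (pathGraph 3).Adj p q := by
      fin_cases p <;> simp [pathGraph_adj, Fin.exists_fin_succ]
    exact ⟨Sum.inr (Sum.inr q), by simp [K1PlusMatchingPlusP3, hpq, hpq.ne]⟩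

lemma edgeSet_eq_range :
    (K1PlusMatchingPlusP3 m).edgeSet = Set.range (Sum.elim
      (fun i => s(Sum.inr (Sum.inl (i, 0)), Sum.inr (Sum.inl (i, 1))))
      (fun j : Fin 2 => s(Sum.inr (Sum.inr j.castSucc), Sum.inr (Sum.inr j.succ)))) := by
  ext e
  induction e using Sym2.ind with
  | _ a b =>
    rcases a with _ | ⟨i, x⟩ | p <;> rcases b with _ | ⟨j, y⟩ | q <;>
      simp [K1PlusMatchingPlusP3, pathGraph_adj]
    · fin_cases x <;> fin_cases y <;> simp [eq_comm]
    · fin_cases p <;> fin_cases q <;> simp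

lemma ncard_edgeSet : (K1PlusMatchingPlusP3 m).edgeSet.ncard = m + 2 := by
  rw [edgeSet_eq_range, Set.ncard_range_of_injective, Nat.card_eq_fintype_card]
  · simp
  rintro (i | i) (j | j) h <;> simp at h
  · rw [h]
  · fin_cases i <;> fin_cases j <;> simp_all

end K1PlusMatchingPlusP3

theorem exists_almostPeripheral_max_size (n : ℕ) (h5 : 5 ≤ n) :
    (Odd n →
      IsAlmostPeripheral (K1PlusMatching ((n - 1) / 2))ᶜ ∧
      Fintype.card (Unit ⊕ Fin ((n - 1) / 2) × Fin 2) = n ∧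
      ((K1PlusMatching ((n - 1) / 2))ᶜ).edgeSet.ncard = (n - 1) ^ 2 / 2) ∧
    (Even n →
      IsAlmostPeripheral (K1PlusMatchingPlusP3 ((n - 4) / 2))ᶜ ∧
      Fintype.card (Unit ⊕ ((Fin ((n - 4) / 2) × Fin 2) ⊕ Fin 3)) = n ∧
      ((K1PlusMatchingPlusP3 ((n - 4) / 2))ᶜ).edgeSet.ncard = (n - 1) ^ 2 / 2) := by
  refine ⟨fun hodd => ?_, fun heven => ?_⟩
  · obtain ⟨m, rfl⟩ := hodd
    rw [show (2 * m + 1 - 1) / 2 = m by omega]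
    have hcard : Fintype.card (Unit ⊕ Fin m × Fin 2) = 2 * m + 1 := by simp; ring
    have : Nontrivial (Unit ⊕ Fin m × Fin 2) :=
      nontrivial_of_ne (Sum.inl ()) (Sum.inr (⟨0, by omega⟩, 0)) Sum.inl_ne_inr
    refine ⟨isAlmostPeripheral_compl K1PlusMatching.not_adj_inl
      K1PlusMatching.exists_adj, hcard, ?_⟩
    rw [ncard_edgeSet_compl, hcard, K1PlusMatching.ncard_edgeSet, Nat.choose_two_right,
      Nat.add_sub_cancel]
    ring_nf; omega
  · obtain ⟨m, rfl⟩ : ∃ m, n = 2 * m + 4 := ⟨(n - 4) / 2, by grind⟩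
    rw [show (2 * m + 4 - 4) / 2 = m by omega]
    have hcard : Fintype.card (Unit ⊕ ((Fin m × Fin 2) ⊕ Fin 3)) = 2 * m + 4 := by simp; ring
    have : Nontrivial (Unit ⊕ ((Fin m × Fin 2) ⊕ Fin 3)) :=
      nontrivial_of_ne (Sum.inl ()) (Sum.inr (Sum.inr 0)) Sum.inl_ne_inr
    refine ⟨isAlmostPeripheral_compl K1PlusMatchingPlusP3.not_adj_inl
      K1PlusMatchingPlusP3.exists_adj, hcard, ?_⟩
    rw [ncard_edgeSet_compl, hcard, K1PlusMatchingPlusP3.ncard_edgeSet, Nat.choose_two_right,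
      show 2 * m + 4 - 1 = 2 * m + 3 by omega]
    ring_nf; omega
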